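/- Let 𝕋^N := (ℝ/ℤ)^N be the flat N-torus with the metric d(a,b) := max_{1≤i≤N} d_{ℝ/ℤ}(a_i, b_i), where d_{ℝ/ℤ} is the quotient metric of ℝ/ℤ, and let q : ℝ^N → 𝕋^N be the canonical projection. Let f : 𝕋^N → 𝕋^N be a map, ←𝕋^N_f its inverse limit with shift f̂, and d_∞ the sup metric on ←𝕋^N_f. Let 0 < η < 1 and let w : ←𝕋^N_f → ℝ^N satisfy ‖w(x) − w(x')‖_∞ ≤ η·d_∞(x, x') for all x, x' ∈ ←𝕋^N_f (sup norm on ℝ^N). Define h₀ : ←𝕋^N_f → 𝕋^N by h₀(x) := x₀ + q(w(x)). Then the map h : ←𝕋^N_f → (𝕋^N)^ℤ given by h(x) := (h₀(f̂^n(x)))_{n∈ℤ} is injective. -/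

import Mathlib

/-!
If `h x = h x'`, then in every coordinate `x n - x' n` is the image in the torus of
`w (f̂ⁿ x') - w (f̂ⁿ x)`, so `d(x n, x' n) ≤ η d_∞(f̂ⁿ x, f̂ⁿ x') = η d_∞(x, x')`. Taking the
supremum over `n` gives `d_∞(x, x') ≤ η d_∞(x, x')`, which forces `d_∞(x, x') = 0` because the
torus is bounded and `η < 1`.
-/

/-- The metric `d_∞` on `X^ℤ`: `d_∞(x,y) = sup_{n ∈ ℤ} d(x_n, y_n)`. -/
noncomputable def dInfty {X : Type*} [PseudoMetricSpace X] (x y : ℤ → X) : ℝ :=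
  ⨆ n : ℤ, dist (x n) (y n)

section dInfty

variable {X : Type*}

lemma dInfty_shift [PseudoMetricSpace X] (x y : ℤ → X) (n : ℤ) :
    dInfty (fun k => x (k + n)) (fun k => y (k + n)) = dInfty x y :=
  (Equiv.addRight n).iSup_comp (g := fun k => dist (x k) (y k))

lemma bddAbove_range_dist [PseudoMetricSpace X] [BoundedSpace X] (x y : ℤ → X) :
    BddAbove (Set.range fun n => dist (x n) (y n)) :=
  ⟨Metric.diam (Set.univ : Set X), by
    rintro _ ⟨n, rfl⟩
    exact Metric.dist_le_diam_of_mem (Bornology.isBounded_univ.mpr ‹_›) trivial trivial⟩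

lemma eq_of_forall_dist_le_mul_dInfty [MetricSpace X] [BoundedSpace X] {η : ℝ} (hη : η < 1)
    {x y : ℤ → X} (h : ∀ n, dist (x n) (y n) ≤ η * dInfty x y) : x = y := by
  have hle : ∀ n, dist (x n) (y n) ≤ dInfty x y := le_ciSup (bddAbove_range_dist x y)
  have hD_nonneg : 0 ≤ dInfty x y := dist_nonneg.trans (hle 0)
  have hD_le : dInfty x y ≤ η * dInfty x y := ciSup_le h
  have hD : dInfty x y = 0 := by nlinarith
  funext n
  exact dist_le_zero.mp (hD ▸ hle n)

end dInfty

/-- The inverse limit `←X_f`. -/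
def inverseLimit {X : Type*} (f : X → X) : Set (ℤ → X) :=
  {x | ∀ n : ℤ, f (x n) = x (n + 1)}

lemma shift_mem_inverseLimit {X : Type*} {f : X → X} {x : ℤ → X} (hx : x ∈ inverseLimit f)
    (n : ℤ) : (fun k => x (k + n)) ∈ inverseLimit f := fun k => by
  simpa only [add_right_comm] using hx (k + n)

lemma AddCircle.pi_norm_coe_le {ι : Type*} [Fintype ι] (p : ℝ) (v : ι → ℝ) :
    ‖(fun i => (v i : AddCircle p))‖ ≤ ‖v‖ :=
  (pi_norm_le_iff_of_nonneg (norm_nonneg v)).mpr fun i =>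
    QuotientAddGroup.norm_mk_le_norm.trans (norm_le_pi_norm v i)

lemma AddCircle.pi_dist_le_of_add_coe_eq {ι : Type*} [Fintype ι] {p : ℝ}
    {a b : ι → AddCircle p} {u v : ι → ℝ}
    (h : (a + fun i => (u i : AddCircle p)) = b + fun i => (v i : AddCircle p)) :
    dist a b ≤ ‖u - v‖ := by
  have hab : a - b = fun i => ((v - u) i : AddCircle p) := by
    funext i
    have hi := congrFun h i
    simp only [Pi.add_apply] at hi
    simp only [Pi.sub_apply, AddCircle.coe_sub]
    rw [sub_eq_sub_iff_add_eq_add, hi, add_comm]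
  rw [dist_eq_norm, hab, norm_sub_rev]
  exact AddCircle.pi_norm_coe_le p (v - u)

theorem robbin_injectivity_criterion_torus_general (N : ℕ)
    (f : (Fin N → AddCircle (1 : ℝ)) → (Fin N → AddCircle (1 : ℝ)))
    (η : ℝ) (hη1 : η < 1)
    (w : (ℤ → Fin N → AddCircle (1 : ℝ)) → (Fin N → ℝ))
    (hw : ∀ x ∈ {x : ℤ → Fin N → AddCircle (1 : ℝ) | ∀ n : ℤ, f (x n) = x (n + 1)},
          ∀ x' ∈ {x : ℤ → Fin N → AddCircle (1 : ℝ) | ∀ n : ℤ, f (x n) = x (n + 1)},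
          ‖w x - w x'‖ ≤ η * dInfty x x') :
    ∀ x ∈ {x : ℤ → Fin N → AddCircle (1 : ℝ) | ∀ n : ℤ, f (x n) = x (n + 1)},
    ∀ x' ∈ {x : ℤ → Fin N → AddCircle (1 : ℝ) | ∀ n : ℤ, f (x n) = x (n + 1)},
      (∀ n : ℤ,
        (x n + fun i => (↑(w (fun k => x (k + n)) i) : AddCircle (1 : ℝ)))
          = (x' n + fun i => (↑(w (fun k => x' (k + n)) i) : AddCircle (1 : ℝ)))) →
      x = x' := by
  intro x hx x' hx' hxx'
  refine eq_of_forall_dist_le_mul_dInfty hη1 fun n => ?_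
  calc dist (x n) (x' n)
      ≤ ‖w (fun k => x (k + n)) - w (fun k => x' (k + n))‖ :=
        AddCircle.pi_dist_le_of_add_coe_eq (hxx' n)
    _ ≤ η * dInfty (fun k => x (k + n)) (fun k => x' (k + n)) :=
        hw _ (shift_mem_inverseLimit hx n) _ (shift_mem_inverseLimit hx' n)
    _ = η * dInfty x x' := by rw [dInfty_shift]

/-- On the flat torus `𝕋^N = (ℝ/ℤ)^N` (with the sup metric on coordinates,
each coordinate carrying the quotient metric of `ℝ/ℤ`), let `f : 𝕋^N → 𝕋^N` be a map with
inverse limit `←𝕋^N_f` (on which the iterated shift acts by `f̂ⁿ(x) = (x_{k+n})_k`).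
Let `0 < η < 1` and `w : ←𝕋^N_f → ℝ^N` be `η`-Lipschitz from `d_∞` to the sup norm.
Define `h₀(x) = x₀ + q(w(x))`, where `q : ℝ^N → 𝕋^N` is the canonical projection.  Then
`h(x) := (h₀(f̂ⁿ(x)))_{n ∈ ℤ}` is injective on `←𝕋^N_f`. -/
theorem robbin_injectivity_criterion_torus (N : ℕ)
    (f : (Fin N → AddCircle (1 : ℝ)) → (Fin N → AddCircle (1 : ℝ)))
    (η : ℝ) (hη0 : 0 < η) (hη1 : η < 1)
    (w : (ℤ → Fin N → AddCircle (1 : ℝ)) → (Fin N → ℝ))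
    (hw : ∀ x ∈ {x : ℤ → Fin N → AddCircle (1 : ℝ) | ∀ n : ℤ, f (x n) = x (n + 1)},
          ∀ x' ∈ {x : ℤ → Fin N → AddCircle (1 : ℝ) | ∀ n : ℤ, f (x n) = x (n + 1)},
          ‖w x - w x'‖ ≤ η * dInfty x x') :
    ∀ x ∈ {x : ℤ → Fin N → AddCircle (1 : ℝ) | ∀ n : ℤ, f (x n) = x (n + 1)},
    ∀ x' ∈ {x : ℤ → Fin N → AddCircle (1 : ℝ) | ∀ n : ℤ, f (x n) = x (n + 1)},
      (∀ n : ℤ,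
        (x n + fun i => (↑(w (fun k => x (k + n)) i) : AddCircle (1 : ℝ)))
          = (x' n + fun i => (↑(w (fun k => x' (k + n)) i) : AddCircle (1 : ℝ)))) →
      x = x' :=
  robbin_injectivity_criterion_torus_general N f η hη1 w hw
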